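/- arXiv:1912.11484 — 6 statements merged into one kernel-verified Lean document; each statement's English description precedes it below -/
import Mathlib

section
/- Let φ : [0,∞) → ℝ be continuous and of exponential order a, and let v > 0 with v^α > max(a,0). Then the Sadik transform of the function t ↦ ∫₀^t φ(τ) dτ equals (1/v^α) · S[φ](v,α,β). -/
/-!
Write `s = v ^ α` and `F t = ∫₀ᵗ φ`. A function of exponential order `a` has a primitive of
every exponential order `b > max a 0`, so for `s > max a 0` both `e^{-ts} φ t` and `e^{-ts} F t`
decay exponentially. Differentiating `G t = e^{-ts} F t` gives `G' = -s e^{-ts} F + e^{-ts} φ`,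
and since `G 0 = 0` and `G → 0` at infinity, `∫₀^∞ G' = 0`, i.e.
`s ∫₀^∞ e^{-ts} F = ∫₀^∞ e^{-ts} φ`.
-/

open Real MeasureTheory Set Filter Topology

def HasExpOrder (f : ℝ → ℝ) (a : ℝ) : Prop :=
  ∃ K, ∀ t ≥ 0, |f t| ≤ K * exp (a * t)

namespace HasExpOrder

variable {f : ℝ → ℝ} {a b : ℝ}

lemma const_nonneg {K : ℝ} (hK : ∀ t ≥ 0, |f t| ≤ K * exp (a * t)) : 0 ≤ K := by
  simpa using (abs_nonneg _).trans (hK 0 le_rfl)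

lemma mono (hf : HasExpOrder f a) (hab : a ≤ b) : HasExpOrder f b := by
  obtain ⟨K, hK⟩ := hf
  refine ⟨K, fun t ht => (hK t ht).trans ?_⟩
  have := const_nonneg hK
  gcongr

lemma exp_neg_mul (hf : HasExpOrder f a) (s : ℝ) :
    HasExpOrder (fun t => exp (-t * s) * f t) (a - s) := by
  obtain ⟨K, hK⟩ := hf
  refine ⟨K, fun t ht => ?_⟩
  calc |exp (-t * s) * f t| = exp (-t * s) * |f t| := by
        rw [abs_mul, abs_of_pos (exp_pos _)]
    _ ≤ exp (-t * s) * (K * exp (a * t)) := by gcongr; exact hK t ht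
    _ = K * exp ((a - s) * t) := by rw [sub_mul, sub_eq_add_neg, exp_add]; ring_nf

lemma tendsto_atTop_zero (hf : HasExpOrder f a) (ha : a < 0) : Tendsto f atTop (𝓝 0) := by
  obtain ⟨K, hK⟩ := hf
  have hdecay : Tendsto (fun t => K * exp (a * t)) atTop (𝓝 0) := by
    simpa using (tendsto_exp_atBot.comp (tendsto_id.const_mul_atTop_of_neg ha)).const_mul K
  exact squeeze_zero_norm' (eventually_ge_atTop 0 |>.mono hK) hdecay

lemma integrableOn_Ioi (hf : HasExpOrder f a) (ha : a < 0)
    (hmeas : AEStronglyMeasurable f (volume.restrict (Ioi 0))) : IntegrableOn f (Ioi 0) := by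
  obtain ⟨K, hK⟩ := hf
  have hdom : IntegrableOn (fun t => K * exp (-(-a) * t)) (Ioi 0) :=
    (exp_neg_integrableOn_Ioi 0 (neg_pos.mpr ha)).const_mul K
  refine hdom.integrable.mono' hmeas ?_
  rw [ae_restrict_iff' measurableSet_Ioi]
  exact .of_forall fun t ht => by simpa using hK t (le_of_lt ht)

/-- The primitive loses the factor `t`, which is absorbed by any increase of the rate. -/
lemma intervalIntegral (hf : HasExpOrder f a) (ha : 0 ≤ a) (hab : a < b) :
    HasExpOrder (fun t => ∫ τ in (0 : ℝ)..t, f τ) b := by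
  obtain ⟨K, hK⟩ := hf
  have hK0 := const_nonneg hK
  have hε : 0 < b - a := sub_pos.mpr hab
  refine ⟨K / (b - a), fun t ht => ?_⟩
  have hprim : |∫ τ in (0 : ℝ)..t, f τ| ≤ K * exp (a * t) * t := by
    have := intervalIntegral.norm_integral_le_of_norm_le_const (a := 0) (b := t)
      (C := K * exp (a * t)) (f := f) fun x hx => by
        rw [uIoc_of_le ht] at hx
        refine (hK x hx.1.le).trans ?_
        gcongr
        exact hx.2
    simpa [abs_of_nonneg ht] using this
  have hlin : (b - a) * t ≤ exp ((b - a) * t) := by linarith [add_one_le_exp ((b - a) * t)]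
  calc |∫ τ in (0 : ℝ)..t, f τ| ≤ K * exp (a * t) * t := hprim
    _ = K / (b - a) * exp (a * t) * ((b - a) * t) := by field_simp
    _ ≤ K / (b - a) * exp (a * t) * exp ((b - a) * t) := by gcongr
    _ = K / (b - a) * exp (b * t) := by rw [mul_assoc, ← exp_add]; ring_nf

end HasExpOrder

lemma integral_exp_neg_mul_intervalIntegral {φ : ℝ → ℝ} {a s : ℝ} (hφ : Continuous φ)
    (hord : HasExpOrder φ a) (hs : max a 0 < s) :
    ∫ t in Ioi (0 : ℝ), exp (-t * s) * ∫ τ in (0 : ℝ)..t, φ τ =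
      (1 / s) * ∫ t in Ioi (0 : ℝ), exp (-t * s) * φ t := by
  set F := fun t => ∫ τ in (0 : ℝ)..t, φ τ
  set G := fun t => exp (-t * s) * F t
  obtain ⟨b, hab, hbs⟩ := exists_between hs
  have hF : HasExpOrder F b := (hord.mono (le_max_left a 0)).intervalIntegral (le_max_right a 0) hab
  have hFderiv (t : ℝ) : HasDerivAt F (φ t) t := (hφ.integral_hasStrictDerivAt 0 t).hasDerivAt
  have hexp : Continuous fun t : ℝ => exp (-t * s) := by fun_prop
  have hFcont : Continuous F := continuous_iff_continuousAt.mpr fun t => (hFderiv t).continuousAt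
  have hφint : IntegrableOn (fun t => exp (-t * s) * φ t) (Ioi 0) :=
    (hord.exp_neg_mul s).integrableOn_Ioi (by linarith [le_max_left a 0])
      (hexp.mul hφ).aestronglyMeasurable
  have hGint : IntegrableOn G (Ioi 0) :=
    (hF.exp_neg_mul s).integrableOn_Ioi (by linarith)
      (hexp.mul hFcont).aestronglyMeasurable
  have hGderiv (t : ℝ) : HasDerivAt G (-s * G t + exp (-t * s) * φ t) t := by
    have hlin : HasDerivAt (fun t : ℝ => -t * s) (-s) t := by
      simpa using (hasDerivAt_id t).neg.mul_const s
    refine (hlin.exp.mul (hFderiv t)).congr_deriv ?_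
    simp only [G]
    ring
  have hFTC : ∫ t in Ioi (0 : ℝ), (-s * G t + exp (-t * s) * φ t) = 0 - G 0 :=
    integral_Ioi_of_hasDerivAt_of_tendsto (hGderiv 0).continuousAt.continuousWithinAt
      (fun t _ => hGderiv t) ((hGint.const_mul (-s)).add hφint)
      ((hF.exp_neg_mul s).tendsto_atTop_zero (by linarith))
  have hs0 : s ≠ 0 := (lt_of_le_of_lt (le_max_right a 0) hs).ne'
  have hG0 : G 0 = 0 := by simp [G, F]
  rw [integral_add (hGint.const_mul (-s)) hφint, integral_const_mul, hG0, sub_zero] at hFTC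
  rw [one_div, eq_inv_mul_iff_mul_eq₀ hs0]
  linarith

theorem sadik_transform_integral_general (φ : ℝ → ℝ) (a α β v : ℝ)
    (hφ : Continuous φ)
    (hbound : ∃ K > 0, ∀ t ≥ 0, |φ t| ≤ K * Real.exp (a * t))
    (hva : max a 0 < v ^ α) :
    v ^ (-β) * ∫ t in Set.Ioi (0:ℝ),
        Real.exp (-t * v ^ α) * ∫ τ in (0:ℝ)..t, φ τ =
      (1 / v ^ α) *
        (v ^ (-β) * ∫ t in Set.Ioi (0:ℝ), Real.exp (-t * v ^ α) * φ t) := by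
  obtain ⟨K, -, hK⟩ := hbound
  rw [integral_exp_neg_mul_intervalIntegral hφ ⟨K, hK⟩ hva]
  ring

/-- Sadik transform of the integral: `S[∫₀ᵗ φ] = (1/v^α) S[φ]`. -/
theorem sadik_transform_integral (φ : ℝ → ℝ) (a α β v : ℝ)
    (hφ : Continuous φ)
    (hbound : ∃ K > 0, ∀ t ≥ 0, |φ t| ≤ K * Real.exp (a * t))
    (hα : α ≠ 0) (hv : 0 < v) (hva : max a 0 < v ^ α) :
    v ^ (-β) * ∫ t in Set.Ioi (0:ℝ),
        Real.exp (-t * v ^ α) * ∫ τ in (0:ℝ)..t, φ τ =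
      (1 / v ^ α) *
        (v ^ (-β) * ∫ t in Set.Ioi (0:ℝ), Real.exp (-t * v ^ α) * φ t) :=
  sadik_transform_integral_general φ a α β v hφ hbound hva
end

section
/- Let φ₁, φ₂ : [0,∞) → ℝ be piecewise continuous and of exponential order a, extended by zero on (−∞,0), and let v > 0 with v^α > a. Then the Sadik transform of the convolution (φ₁ ∗ φ₂)(t) = ∫₀^t φ₁(τ) φ₂(t−τ) dτ satisfies S[φ₁ ∗ φ₂](v,α,β) = v^β · S[φ₁](v,α,β) · S[φ₂](v,α,β). -/
open Real MeasureTheory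

/-- The shear `(x, y) ↦ (x + y, y)` as a measurable equivalence of `ℝ × ℝ`. -/
def sadikShear : ℝ × ℝ ≃ᵐ ℝ × ℝ where
  toEquiv :=
    { toFun := fun z => (z.1 + z.2, z.2)
      invFun := fun z => (z.1 - z.2, z.2)
      left_inv := fun z => by simp
      right_inv := fun z => by simp }
  measurable_toFun := (measurable_fst.add measurable_snd).prodMk measurable_snd
  measurable_invFun := (measurable_fst.sub measurable_snd).prodMk measurable_snd

/-- Integrability of an exponentially damped function of exponential order. -/
lemma sadik_integrable_aux {φ : ℝ → ℝ} {a s K : ℝ}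
    (hφ : ContinuousOn φ (Set.Ici 0))
    (hK : ∀ t ≥ 0, |φ t| ≤ K * Real.exp (a * t)) (hsa : a < s) :
    IntegrableOn (fun t => Real.exp (-t * s) * φ t) (Set.Ioi (0:ℝ)) := by
  have hmeas : AEStronglyMeasurable (fun t => Real.exp (-t * s) * φ t)
      (volume.restrict (Set.Ioi (0:ℝ))) := by
    apply ContinuousOn.aestronglyMeasurable _ measurableSet_Ioi
    exact ((Real.continuous_exp.comp (continuous_id.neg.mul continuous_const)).continuousOn).mul
      (hφ.mono Set.Ioi_subset_Ici_self)
  have hg : IntegrableOn (fun t => K * Real.exp (-(s - a) * t)) (Set.Ioi (0:ℝ)) :=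
    (exp_neg_integrableOn_Ioi 0 (by linarith : (0:ℝ) < s - a)).const_mul K
  refine Integrable.mono' hg hmeas ?_
  refine (ae_restrict_iff' measurableSet_Ioi).2 (Filter.Eventually.of_forall fun t ht => ?_)
  have ht0 : (0:ℝ) ≤ t := (le_of_lt ht)
  calc ‖Real.exp (-t * s) * φ t‖ = Real.exp (-t * s) * |φ t| := by
        rw [norm_mul, Real.norm_eq_abs, Real.norm_eq_abs, abs_of_pos (Real.exp_pos _)]
    _ ≤ Real.exp (-t * s) * (K * Real.exp (a * t)) := by
        exact mul_le_mul_of_nonneg_left (hK t ht0) (Real.exp_pos _).le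
    _ = K * Real.exp (-(s - a) * t) := by
        rw [mul_left_comm, ← Real.exp_add]
        congr 1
        ring

/-- Sadik transform of the convolution:
`S[φ₁ ∗ φ₂] = v^β S[φ₁] S[φ₂]`. -/
theorem sadik_transform_convolution (φ₁ φ₂ : ℝ → ℝ) (a α β v : ℝ)
    (h₁ : ContinuousOn φ₁ (Set.Ici 0)) (h₂ : ContinuousOn φ₂ (Set.Ici 0))
    (hb₁ : ∃ K > 0, ∀ t ≥ 0, |φ₁ t| ≤ K * Real.exp (a * t))
    (hb₂ : ∃ K > 0, ∀ t ≥ 0, |φ₂ t| ≤ K * Real.exp (a * t))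
    (hα : α ≠ 0) (hv : 0 < v) (hva : a < v ^ α) :
    v ^ (-β) * ∫ t in Set.Ioi (0:ℝ),
        Real.exp (-t * v ^ α) * ∫ τ in (0:ℝ)..t, φ₁ τ * φ₂ (t - τ) =
      v ^ β *
        (v ^ (-β) * ∫ t in Set.Ioi (0:ℝ), Real.exp (-t * v ^ α) * φ₁ t) *
        (v ^ (-β) * ∫ t in Set.Ioi (0:ℝ), Real.exp (-t * v ^ α) * φ₂ t) := by
  obtain ⟨K₁, hK₁, hb₁⟩ := hb₁
  obtain ⟨K₂, hK₂, hb₂⟩ := hb₂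
  set s := v ^ α with hsdef
  have hsa : a < s := hva
  set f₁ : ℝ → ℝ := fun t => Real.exp (-t * s) * φ₁ t with hf₁
  set f₂ : ℝ → ℝ := fun t => Real.exp (-t * s) * φ₂ t with hf₂
  have hint₁ : IntegrableOn f₁ (Set.Ioi (0:ℝ)) := sadik_integrable_aux h₁ hb₁ hsa
  have hint₂ : IntegrableOn f₂ (Set.Ioi (0:ℝ)) := sadik_integrable_aux h₂ hb₂ hsa
  set H : ℝ × ℝ → ℝ := fun p => Real.exp (-p.1 * s) * (φ₁ p.2 * φ₂ (p.1 - p.2)) with hH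
  set S : Set (ℝ × ℝ) := {p : ℝ × ℝ | 0 < p.2 ∧ p.2 < p.1} with hS
  set T : ℝ × ℝ → ℝ × ℝ := fun z => (z.1 + z.2, z.2) with hT
  have hTmp : MeasurePreserving T (volume.prod volume) (volume.prod volume) :=
    measurePreserving_add_prod volume volume
  have hTemb : MeasurableEmbedding T := sadikShear.measurableEmbedding
  have hcomp : ∀ z : ℝ × ℝ, H (T z) = f₂ z.1 * f₁ z.2 := by
    intro z
    have hexp : Real.exp (-(z.1 + z.2) * s) = Real.exp (-z.1 * s) * Real.exp (-z.2 * s) := by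
      rw [← Real.exp_add]; congr 1; ring
    simp only [hH, hT, hf₁, hf₂, add_sub_cancel_right]
    rw [hexp]; ring
  have himage : T '' (Set.Ioi 0 ×ˢ Set.Ioi 0) = S := by
    ext p
    constructor
    · rintro ⟨z, hz, rfl⟩
      obtain ⟨hz1, hz2⟩ := hz
      simp only [Set.mem_Ioi] at hz1 hz2
      exact ⟨hz2, by simp [hT, hz1]⟩
    · rintro ⟨hp1, hp2⟩
      refine ⟨(p.1 - p.2, p.2), ⟨?_, hp1⟩, ?_⟩
      · simpa using sub_pos.mpr hp2
      · simp [hT]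
  have hSmeas : MeasurableSet S :=
    MeasurableSet.inter (measurableSet_lt measurable_const measurable_snd)
      (measurableSet_lt measurable_snd measurable_fst)
  have hprodeq : (volume.restrict (Set.Ioi (0:ℝ))).prod (volume.restrict (Set.Ioi (0:ℝ)))
      = (volume.prod volume).restrict (Set.Ioi (0:ℝ) ×ˢ Set.Ioi (0:ℝ)) :=
    Measure.prod_restrict _ _
  have hGint : Integrable (fun z : ℝ × ℝ => f₂ z.1 * f₁ z.2)
      ((volume.prod volume).restrict (Set.Ioi (0:ℝ) ×ˢ Set.Ioi (0:ℝ))) := by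
    rw [← hprodeq]
    exact hint₂.mul_prod hint₁
  have hrestrictMP : MeasurePreserving T
      ((volume.prod volume).restrict (Set.Ioi (0:ℝ) ×ˢ Set.Ioi (0:ℝ)))
      ((volume.prod volume).restrict S) := by
    have := hTmp.restrict_image_emb hTemb (Set.Ioi (0:ℝ) ×ˢ Set.Ioi (0:ℝ))
    rwa [himage] at this
  have hHS : IntegrableOn H S (volume.prod volume) := by
    refine (hrestrictMP.integrable_comp_emb hTemb).mp ?_
    have : H ∘ T = fun z : ℝ × ℝ => f₂ z.1 * f₁ z.2 := funext hcomp
    rw [this]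
    exact hGint
  have hSint : (∫ p in S, H p ∂(volume.prod volume))
      = (∫ t in Set.Ioi (0:ℝ), f₂ t) * (∫ t in Set.Ioi (0:ℝ), f₁ t) := by
    rw [← himage, hTmp.setIntegral_image_emb hTemb H _]
    simp only [hcomp]
    exact setIntegral_prod_mul f₂ f₁ _ _
  -- Fubini: write the set integral as an iterated integral
  have hfub : (∫ p in S, H p ∂(volume.prod volume))
      = ∫ t, ∫ τ, S.indicator H (t, τ) := by
    rw [← integral_indicator hSmeas]
    exact integral_prod _ ((integrable_indicator_iff hSmeas).2 hHS)
  have hinner : ∀ t : ℝ, (∫ τ, S.indicator H (t, τ))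
      = Set.indicator (Set.Ioi (0:ℝ))
          (fun t => Real.exp (-t * s) * ∫ τ in (0:ℝ)..t, φ₁ τ * φ₂ (t - τ)) t := by
    intro t
    by_cases ht : 0 < t
    · have hEq : (fun τ => S.indicator H (t, τ))
          = (Set.Ioo (0:ℝ) t).indicator (fun τ => H (t, τ)) := by
        funext τ
        by_cases hτ : τ ∈ Set.Ioo (0:ℝ) t
        · rw [Set.indicator_of_mem hτ, Set.indicator_of_mem]
          exact ⟨hτ.1, hτ.2⟩
        · rw [Set.indicator_of_notMem hτ, Set.indicator_of_notMem]
          intro hmem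
          exact hτ ⟨hmem.1, hmem.2⟩
      rw [hEq, integral_indicator measurableSet_Ioo, Set.indicator_of_mem (Set.mem_Ioi.mpr ht)]
      rw [intervalIntegral.integral_of_le ht.le, ← integral_Ioc_eq_integral_Ioo]
      simp only [hH]
      rw [MeasureTheory.integral_const_mul]
    · have hEq : (fun τ => S.indicator H (t, τ)) = fun _ => (0:ℝ) := by
        funext τ
        apply Set.indicator_of_notMem
        rintro ⟨hm1, hm2⟩
        exact ht (lt_trans hm1 hm2)
      rw [hEq, integral_zero]
      exact (Set.indicator_of_notMem (by simpa using ht) _).symm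
  have key : (∫ t in Set.Ioi (0:ℝ),
        Real.exp (-t * s) * ∫ τ in (0:ℝ)..t, φ₁ τ * φ₂ (t - τ))
      = (∫ t in Set.Ioi (0:ℝ), f₂ t) * (∫ t in Set.Ioi (0:ℝ), f₁ t) := by
    rw [← hSint, hfub]
    simp only [hinner]
    rw [integral_indicator measurableSet_Ioi]
  rw [key]
  have hvβ : v ^ β * v ^ (-β) = 1 := by
    rw [← Real.rpow_add hv]
    simp
  have hre : v ^ β * (v ^ (-β) * (∫ t in Set.Ioi (0:ℝ), f₁ t))
        * (v ^ (-β) * (∫ t in Set.Ioi (0:ℝ), f₂ t))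
      = (v ^ β * v ^ (-β)) * (v ^ (-β)
        * ((∫ t in Set.Ioi (0:ℝ), f₂ t) * (∫ t in Set.Ioi (0:ℝ), f₁ t))) := by ring
  rw [hre, hvβ, one_mul]
end

section
/- For a ≥ 0, v > 0 with v^α > 0, the Sadik transform of the function t ↦ (t − a)·η(t − a) equals e^{−a v^α} / v^{2α+β}. -/
open Real MeasureTheory

/-!
The unit step cuts the integral down to `(a, ∞)`; the substitution `t = u + a` pulls out the
factor `e^{-a s}` and leaves the Laplace transform `∫₀^∞ u e^{-s u} du = Γ(2) / s²`. At
`s = v^α` the factor `v^{-β}` combines with `s^{-2} = v^{-2α}`.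
-/

open Set

theorem setIntegral_Ioi_zero_mul_heaviside (f : ℝ → ℝ) {a : ℝ} (ha : 0 ≤ a) :
    ∫ t in Ioi 0, f t * (if 0 ≤ t - a then (1:ℝ) else 0) = ∫ t in Ioi a, f t := by
  have h_indicator : (fun t ↦ f t * (if 0 ≤ t - a then (1:ℝ) else 0)) = (Ici a).indicator f := by
    ext t
    by_cases h : a ≤ t <;> simp [h, indicator, sub_nonneg]
  have h_set : (Ioi 0 ∩ Ici a : Set ℝ) =ᵐ[volume] Ioi a := by
    simpa only [Ioi_inter_Ioi, max_eq_right ha] using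
      (ae_eq_refl (Ioi (0:ℝ))).inter (Ioi_ae_eq_Ici (a := a)).symm
  rw [h_indicator, setIntegral_indicator measurableSet_Ici, setIntegral_congr_set h_set]

theorem setIntegral_Ioi_zero_comp_add_right {E : Type*} [NormedAddCommGroup E] [NormedSpace ℝ E]
    (f : ℝ → E) (a : ℝ) : ∫ u in Ioi 0, f (u + a) = ∫ t in Ioi a, f t := by
  simpa only [preimage_add_const_Ioi, sub_self] using
    (measurePreserving_add_right volume a).setIntegral_preimage_emb
      (measurableEmbedding_addRight a) f (Ioi a)

theorem integral_Ioi_mul_exp_neg_mul {s : ℝ} (hs : 0 < s) :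
    ∫ u in Ioi 0, u * exp (-(s * u)) = 1 / s ^ 2 := by
  have h := integral_rpow_mul_exp_neg_mul_Ioi two_pos hs
  simpa only [show (2:ℝ) - 1 = 1 by norm_num, rpow_one, Gamma_two, mul_one, rpow_two, div_pow,
    one_pow] using h

theorem integral_Ioi_exp_neg_mul_mul_shifted_ramp {a s : ℝ} (ha : 0 ≤ a) (hs : 0 < s) :
    ∫ t in Ioi 0, exp (-t * s) * ((t - a) * (if 0 ≤ t - a then (1:ℝ) else 0)) =
      exp (-a * s) / s ^ 2 := by
  simp_rw [← mul_assoc]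
  rw [setIntegral_Ioi_zero_mul_heaviside _ ha, ← setIntegral_Ioi_zero_comp_add_right]
  calc ∫ u in Ioi 0, exp (-(u + a) * s) * (u + a - a)
      = ∫ u in Ioi 0, exp (-a * s) * (u * exp (-(s * u))) := by
        congr 1 with u
        rw [show -(u + a) * s = -a * s + -(s * u) by ring, exp_add]
        ring
    _ = exp (-a * s) / s ^ 2 := by
        rw [integral_const_mul, integral_Ioi_mul_exp_neg_mul hs]
        ring

theorem sadik_transform_ramp_general (a α β v : ℝ) (ha : 0 ≤ a)
    (hv : 0 < v) (hvα : 0 < v ^ α) :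
    v ^ (-β) * ∫ t in Set.Ioi (0:ℝ),
        Real.exp (-t * v ^ α) * ((t - a) * (if 0 ≤ t - a then (1:ℝ) else 0)) =
      Real.exp (-a * v ^ α) / v ^ (2 * α + β) := by
  rw [integral_Ioi_exp_neg_mul_mul_shifted_ramp ha hvα, rpow_neg hv.le, rpow_add hv,
    mul_comm 2 α, rpow_mul hv.le, rpow_two]
  ring

/-- Sadik transform of `(t-a) η(t-a)` equals `e^{-a v^α} / v^{2α+β}`. -/
theorem sadik_transform_ramp (a α β v : ℝ) (ha : 0 ≤ a)
    (hα : α ≠ 0) (hv : 0 < v) (hvα : 0 < v ^ α) :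
    v ^ (-β) * ∫ t in Set.Ioi (0:ℝ),
        Real.exp (-t * v ^ α) * ((t - a) * (if 0 ≤ t - a then (1:ℝ) else 0)) =
      Real.exp (-a * v ^ α) / v ^ (2 * α + β) :=
  sadik_transform_ramp_general a α β v ha hv hvα
end

section
/- Let p > 0, q > 0, m a natural number, and a ∈ ℝ. For v > 0 with v^{αp} > |a|, the Sadik transform of φ(t) = t^{pm+q−1} E_{p,q}^{(m)}(a t^p) equals m! · v^{αp − (αq + β)} / (v^{αp} − a)^{m+1}, where E_{p,q}^{(m)} is the m-th derivative of the two-parameter Mittag-Leffler function. -/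
/-!
Differentiating the everywhere convergent series `E_{p,q}(z) = ∑ z^k / Γ(pk + q)` term by term
gives `E_{p,q}^{(m)}(z) = ∑ (k+m)!/k! · z^k / Γ(p(k+m) + q)`. In `t^{pm+q-1} E_{p,q}^{(m)}(a t^p)`
the `k`-th term is a multiple of `t^{p(k+m)+q-1}`, whose Laplace transform at `s` is
`Γ(p(k+m)+q) / s^{p(k+m)+q}`; this Gamma factor cancels the one in the coefficient and leaves
`s^{-(pm+q)} ∑ (k+m)!/k! (a/s^p)^k = m! s^{p-q} / (s^p - a)^{m+1}` for `|a| < s^p`, where the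
absolute convergence of this series justifies exchanging sum and integral.
The Sadik transform is the Laplace transform at `s = v^α`, multiplied by `v^{-β}`.
-/

open Real MeasureTheory Filter Set

/-- The two-parameter Mittag-Leffler function `E_{p,q}`. -/
noncomputable def mittagLeffler (p q : ℝ) : ℝ → ℝ :=
  fun z => ∑' k : ℕ, z ^ k / Real.Gamma (p * k + q)

section PowerSeries

variable {c : ℕ → ℝ}

lemma norm_mul_natCast_mul_pow_pred_le (b : ℝ) (n : ℕ) {R y : ℝ} (hR : 1 ≤ R) (hy : |y| ≤ R) :
    ‖b * (n * y ^ (n - 1))‖ ≤ ‖b * (2 * R) ^ n‖ := by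
  have hn : (n : ℝ) ≤ 2 ^ n := by exact_mod_cast Nat.lt_two_pow_self.le
  have hy' : |y| ^ (n - 1) ≤ R ^ n :=
    (pow_le_pow_left₀ (abs_nonneg y) hy _).trans (pow_le_pow_right₀ hR (n.sub_le 1))
  simp only [norm_mul, norm_pow, Real.norm_eq_abs, Nat.abs_cast, abs_two,
    abs_of_nonneg (zero_le_one.trans hR)]
  rw [mul_pow]
  gcongr

lemma summable_mul_natCast_mul_pow_pred (hc : ∀ z, Summable fun k => c k * z ^ k) (z : ℝ) :
    Summable fun n => c n * (n * z ^ (n - 1)) :=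
  .of_norm_bounded (hc (2 * (|z| + 1))).norm fun n =>
    norm_mul_natCast_mul_pow_pred_le _ n (by linarith [abs_nonneg z]) (by linarith)

lemma summable_natCast_succ_mul_mul_pow (hc : ∀ z, Summable fun k => c k * z ^ k) (z : ℝ) :
    Summable fun k => (k + 1) * c (k + 1) * z ^ k := by
  refine ((summable_nat_add_iff 1).mpr (summable_mul_natCast_mul_pow_pred hc z)).congr fun k => ?_
  simp only [Nat.cast_add, Nat.cast_one, Nat.add_sub_cancel]
  ring

lemma hasDerivAt_tsum_mul_pow (hc : ∀ z, Summable fun k => c k * z ^ k) (z : ℝ) :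
    HasDerivAt (fun z => ∑' k, c k * z ^ k) (∑' k, (k + 1) * c (k + 1) * z ^ k) z := by
  set R := |z| + 1
  have hR : 1 ≤ R := by linarith [abs_nonneg z]
  have hball : ∀ y ∈ Ioo (-R) R, |y| ≤ R := fun y hy => abs_le.mpr ⟨hy.1.le, hy.2.le⟩
  have hderiv := hasDerivAt_tsum_of_isPreconnected (hc (2 * R)).norm isOpen_Ioo
    isPreconnected_Ioo (g := fun k y => c k * y ^ k) (g' := fun k y => c k * (k * y ^ (k - 1)))
    (fun k y _ => (hasDerivAt_pow k y).const_mul (c k))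
    (fun k y hy => norm_mul_natCast_mul_pow_pred_le _ k hR (hball y hy))
    (y₀ := 0) ⟨by linarith, by linarith⟩ (hc 0)
    (y := z) ⟨by linarith [neg_abs_le z], by linarith [le_abs_self z]⟩
  refine hderiv.congr_deriv ?_
  rw [(summable_mul_natCast_mul_pow_pred hc z).tsum_eq_zero_add]
  simp only [CharP.cast_eq_zero, zero_mul, mul_zero, zero_add, Nat.cast_add, Nat.cast_one,
    Nat.add_sub_cancel]
  exact tsum_congr fun k => by ring

theorem iteratedDeriv_tsum_mul_pow (hc : ∀ z, Summable fun k => c k * z ^ k) (m : ℕ) :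
    iteratedDeriv m (fun z => ∑' k, c k * z ^ k) =
      fun z => ∑' k, ((k + m).descFactorial m : ℝ) * c (k + m) * z ^ k := by
  induction m generalizing c with
  | zero => simp
  | succ m ih =>
    have hderiv : deriv (fun z => ∑' k, c k * z ^ k) =
        fun z => ∑' k, (k + 1) * c (k + 1) * z ^ k :=
      funext fun z => (hasDerivAt_tsum_mul_pow hc z).deriv
    rw [iteratedDeriv_succ', hderiv, ih (summable_natCast_succ_mul_mul_pow hc)]
    funext z
    refine tsum_congr fun k => ?_
    rw [← add_assoc, Nat.succ_descFactorial_succ]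
    push_cast
    ring

end PowerSeries

/-- Slope monotonicity of the convex function `log ∘ Γ` on `x - 1 < x < x + p`, together with
`log Γ(x) - log Γ(x - 1) = log (x - 1)`. -/
lemma Real.rpow_sub_one_mul_Gamma_le_Gamma_add {x p : ℝ} (hx : 1 < x) (hp : 0 < p) :
    (x - 1) ^ p * Gamma x ≤ Gamma (x + p) := by
  have hx1 : 0 < x - 1 := by linarith
  have hslope := convexOn_log_Gamma.slope_mono_adjacent (mem_Ioi.mpr hx1)
    (mem_Ioi.mpr (by linarith : 0 < x + p)) (by linarith : x - 1 < x) (by linarith : x < x + p)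
  have hGamma : Gamma x = (x - 1) * Gamma (x - 1) := by
    simpa using Gamma_add_one hx1.ne'
  have hlog : log (Gamma x) - log (Gamma (x - 1)) = log (x - 1) := by
    rw [hGamma, log_mul hx1.ne' (Gamma_pos_of_pos hx1).ne']
    ring
  simp only [Function.comp, hlog, sub_sub_cancel, div_one, add_sub_cancel_left] at hslope
  rw [← log_le_log_iff (by positivity) (Gamma_pos_of_pos (by linarith)),
    log_mul (by positivity) (Gamma_pos_of_pos (by linarith)).ne', log_rpow hx1]
  rw [le_div_iff₀ hp] at hslope
  linarith

lemma summable_pow_div_Gamma {p q : ℝ} (hp : 0 < p) (hq : 0 < q) (z : ℝ) :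
    Summable fun k : ℕ => z ^ k / Gamma (p * k + q) := by
  have hlin : Tendsto (fun k : ℕ => p * k + q - 1) atTop atTop := by
    simpa only [add_sub_assoc] using
      tendsto_atTop_add_const_right _ (q - 1) (tendsto_natCast_atTop_atTop.const_mul_atTop hp)
  refine summable_of_ratio_norm_eventually_le (r := 1 / 2) (by norm_num) ?_
  filter_upwards [hlin.eventually_gt_atTop 0,
    ((tendsto_rpow_atTop hp).comp hlin).eventually_ge_atTop (2 * |z|)] with k hk hkz
  have hG : 0 < Gamma (p * k + q) := Gamma_pos_of_pos (by linarith)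
  have hGrowth := rpow_sub_one_mul_Gamma_le_Gamma_add (by linarith : 1 < p * k + q) hp
  rw [Nat.cast_succ, mul_add_one, add_right_comm]
  have hG' : 0 < Gamma (p * k + q + p) := Gamma_pos_of_pos (by linarith)
  simp only [norm_div, norm_mul, norm_pow, Real.norm_eq_abs, abs_of_pos hG, abs_of_pos hG',
    pow_succ]
  rw [div_le_iff₀ hG']
  calc |z| ^ k * |z| ≤ |z| ^ k * ((p * k + q - 1) ^ p / 2) := by
        gcongr
        linarith only [show 2 * |z| ≤ (p * k + q - 1) ^ p from hkz]
    _ = 1 / 2 * (|z| ^ k / Gamma (p * k + q)) * ((p * k + q - 1) ^ p * Gamma (p * k + q)) := by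
      field_simp
    _ ≤ 1 / 2 * (|z| ^ k / Gamma (p * k + q)) * Gamma (p * k + q + p) := by gcongr

lemma iteratedDeriv_mittagLeffler {p q : ℝ} (hp : 0 < p) (hq : 0 < q) (m : ℕ) :
    iteratedDeriv m (mittagLeffler p q) =
      fun z => ∑' k : ℕ, ((k + m).descFactorial m : ℝ) * (Gamma (p * ↑(k + m) + q))⁻¹ * z ^ k := by
  have hseries : mittagLeffler p q = fun z => ∑' k : ℕ, (Gamma (p * k + q))⁻¹ * z ^ k := by
    funext z
    simp only [mittagLeffler, div_eq_inv_mul]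
  rw [hseries]
  exact iteratedDeriv_tsum_mul_pow
    (fun z => by simpa only [div_eq_inv_mul] using summable_pow_div_Gamma hp hq z) m

lemma tsum_descFactorial_mul_geometric_of_norm_lt_one {𝕜 : Type*} [NormedDivisionRing 𝕜]
    (k : ℕ) {r : 𝕜} (hr : ‖r‖ < 1) :
    ∑' n : ℕ, ((n + k).descFactorial k : 𝕜) * r ^ n = k.factorial / (1 - r) ^ (k + 1) := by
  simp_rw [Nat.descFactorial_eq_factorial_mul_choose, Nat.cast_mul, mul_assoc]
  rw [tsum_mul_left, tsum_choose_mul_geometric_of_norm_lt_one k hr, mul_one_div]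

lemma integral_mul_rpow_mul_exp_neg_mul_Ioi {p c s : ℝ} (hp : 0 < p) (hc : 0 < c) (hs : 0 < s)
    (b : ℝ) (k : ℕ) :
    ∫ t in Ioi 0, b * (t ^ (p * k + c - 1) * exp (-(s * t))) =
      (1 / s) ^ c * (b * Gamma (p * k + c) / (s ^ p) ^ k) := by
  rw [integral_const_mul, integral_rpow_mul_exp_neg_mul_Ioi (by positivity) hs,
    rpow_add (by positivity), rpow_mul (by positivity), rpow_natCast, div_rpow zero_le_one hs.le,
    one_rpow, one_div_pow]
  ring

lemma integral_exp_neg_mul_rpow_mul_tsum {d : ℕ → ℝ} {a c p s : ℝ} (hp : 0 < p) (hc : 0 < c)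
    (hs : 0 < s) (hd : Summable fun k => |d k| * Gamma (p * k + c) * (|a| / s ^ p) ^ k) :
    ∫ t in Ioi 0, exp (-(s * t)) * (t ^ (c - 1) * ∑' k, d k * (a * t ^ p) ^ k) =
      (1 / s) ^ c * ∑' k, d k * Gamma (p * k + c) * (a / s ^ p) ^ k := by
  set F : ℕ → ℝ → ℝ := fun k t => d k * a ^ k * (t ^ (p * k + c - 1) * exp (-(s * t)))
  have hF : ∀ t ∈ Ioi (0 : ℝ),
      exp (-(s * t)) * (t ^ (c - 1) * ∑' k, d k * (a * t ^ p) ^ k) = ∑' k, F k t := by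
    intro t ht
    rw [← tsum_mul_left, ← tsum_mul_left]
    refine tsum_congr fun k => ?_
    have hpow : t ^ (p * k + c - 1) = t ^ (c - 1) * (t ^ p) ^ k := by
      rw [← rpow_natCast, ← rpow_mul ht.le, ← rpow_add ht]
      ring_nf
    simp only [F, hpow]
    ring
  have hF_norm : ∀ k, ∀ t ∈ Ioi (0 : ℝ),
      ‖F k t‖ = |d k| * |a| ^ k * (t ^ (p * k + c - 1) * exp (-(s * t))) := by
    intro k t ht
    simp only [F, norm_mul, norm_pow, Real.norm_eq_abs, abs_of_pos (exp_pos _),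
      abs_of_pos (rpow_pos_of_pos (mem_Ioi.mp ht) _)]
  have hF_int : ∀ k, Integrable (F k) (volume.restrict (Ioi 0)) := by
    intro k
    refine (Integrable.of_integral_ne_zero ?_).const_mul (d k * a ^ k)
    rw [integral_rpow_mul_exp_neg_mul_Ioi (by positivity) hs]
    exact mul_ne_zero (by positivity) (Gamma_pos_of_pos (by positivity)).ne'
  have hF_summable : Summable fun k => ∫ t in Ioi 0, ‖F k t‖ := by
    refine (hd.mul_left ((1 / s) ^ c)).congr fun k => ?_
    rw [setIntegral_congr_fun measurableSet_Ioi (hF_norm k),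
      integral_mul_rpow_mul_exp_neg_mul_Ioi hp hc hs, div_pow]
    ring
  rw [setIntegral_congr_fun measurableSet_Ioi hF,
    ← integral_tsum_of_summable_integral_norm hF_int hF_summable, ← tsum_mul_left]
  refine tsum_congr fun k => ?_
  rw [integral_mul_rpow_mul_exp_neg_mul_Ioi hp hc hs, div_pow]
  ring

theorem integral_exp_neg_mul_rpow_mul_iteratedDeriv_mittagLeffler {p q a s : ℝ} (hp : 0 < p)
    (hq : 0 < q) (hs : 0 < s) (ha : |a| < s ^ p) (m : ℕ) :
    ∫ t in Ioi 0, exp (-(s * t)) *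
        (t ^ (p * m + q - 1) * iteratedDeriv m (mittagLeffler p q) (a * t ^ p)) =
      m.factorial * s ^ (p - q) / (s ^ p - a) ^ (m + 1) := by
  have hsp : 0 < s ^ p := by positivity
  have hcoef : ∀ k : ℕ, ((k + m).descFactorial m : ℝ) * (Gamma (p * ↑(k + m) + q))⁻¹ *
      Gamma (p * k + (p * m + q)) = (k + m).descFactorial m := fun k => by
    rw [show p * k + (p * m + q) = p * ↑(k + m) + q by push_cast; ring,
      inv_mul_cancel_right₀ (Gamma_pos_of_pos (by positivity)).ne']
  have hsummable : Summable fun k : ℕ => |((k + m).descFactorial m : ℝ) *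
      (Gamma (p * ↑(k + m) + q))⁻¹| * Gamma (p * k + (p * m + q)) * (|a| / s ^ p) ^ k := by
    refine (summable_descFactorial_mul_geometric_of_norm_lt_one m (r := |a| / s ^ p)
      (by rwa [Real.norm_eq_abs, abs_of_nonneg (by positivity), div_lt_one hsp])).congr
      fun k => ?_
    have hGamma : 0 < Gamma (p * ↑(k + m) + q) := Gamma_pos_of_pos (by positivity)
    rw [abs_of_nonneg (mul_nonneg (Nat.cast_nonneg _) (inv_nonneg.mpr hGamma.le)), hcoef]
  have hpow : (1 / s) ^ (p * m + q) * (s ^ p) ^ (m + 1) = s ^ (p - q) := by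
    rw [← rpow_natCast, ← rpow_mul hs.le, one_div, inv_rpow hs.le, ← rpow_neg hs.le,
      ← rpow_add hs]
    congr 1
    push_cast
    ring
  rw [iteratedDeriv_mittagLeffler hp hq m,
    integral_exp_neg_mul_rpow_mul_tsum hp (by positivity) hs hsummable]
  simp_rw [hcoef]
  rw [tsum_descFactorial_mul_geometric_of_norm_lt_one m
      (by rwa [norm_div, Real.norm_eq_abs, norm_of_nonneg hsp.le, div_lt_one hsp]),
    one_sub_div hsp.ne', div_pow, ← hpow]
  field_simp

theorem sadik_transform_mittagLeffler_general (p q : ℝ) (m : ℕ) (a α β v : ℝ)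
    (hp : 0 < p) (hq : 0 < q) (hv : 0 < v)
    (hva : |a| < v ^ (α * p)) :
    v ^ (-β) * ∫ t in Set.Ioi (0:ℝ),
        Real.exp (-t * v ^ α) *
          (t ^ (p * m + q - 1) * iteratedDeriv m (mittagLeffler p q) (a * t ^ p)) =
      (Nat.factorial m : ℝ) * v ^ (α * p - (α * q + β)) / (v ^ (α * p) - a) ^ (m + 1) := by
  have hpow : ∀ x, (v ^ α) ^ x = v ^ (α * x) := fun x => (rpow_mul hv.le α x).symm
  simp_rw [neg_mul, mul_comm _ (v ^ α)]
  rw [integral_exp_neg_mul_rpow_mul_iteratedDeriv_mittagLeffler hp hq (by positivity)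
    (by rwa [hpow]) m, hpow, hpow, mul_div_assoc', mul_left_comm, ← rpow_add hv]
  ring_nf

/-- Sadik transform of `t^{pm+q-1} E_{p,q}^{(m)}(a t^p)` equals
`m! v^{αp-(αq+β)} / (v^{αp} - a)^{m+1}`. -/
theorem sadik_transform_mittagLeffler (p q : ℝ) (m : ℕ) (a α β v : ℝ)
    (hp : 0 < p) (hq : 0 < q) (hα : α ≠ 0) (hv : 0 < v)
    (hva : |a| < v ^ (α * p)) :
    v ^ (-β) * ∫ t in Set.Ioi (0:ℝ),
        Real.exp (-t * v ^ α) *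
          (t ^ (p * m + q - 1) * iteratedDeriv m (mittagLeffler p q) (a * t ^ p)) =
      (Nat.factorial m : ℝ) * v ^ (α * p - (α * q + β)) / (v ^ (α * p) - a) ^ (m + 1) :=
  sadik_transform_mittagLeffler_general p q m a α β v hp hq hv hva
end

section
/- Let p > 0 and a ∈ ℝ. For v > 0 with v^{αp} > |a|, the Sadik transform of φ(t) = E_{p,1}(a t^p) (i.e., the case m = 0, q = 1 of the Mittag-Leffler family) equals v^{α(p−1) − β} / (v^{αp} − a). -/
/-!
Expanding `E_{p,1}(a t^p)` as its power series, the `k`-th term has Laplace transform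
`a^k Γ(pk+1)/Γ(pk+1) · s^{-(pk+1)} = (a / s^p)^k / s` by Euler's Gamma integral, with `s = v^α`.
For `|a| < s^p` the same computation with `|a|` shows that the series of absolute integrals is a
convergent geometric series, so integral and sum may be interchanged, and summing the geometric
series gives `s^{p-1} / (s^p - a)`.
-/

open Real MeasureTheory Set

namespace MittagLeffler

/-- The `k`-th summand of `E_{p,1}(b t^p)`. -/
noncomputable def term (p b : ℝ) (k : ℕ) (t : ℝ) : ℝ :=
  (b * t ^ p) ^ k / Gamma (p * k + 1)

variable {p s : ℝ}

lemma exp_neg_mul_term_eq (b : ℝ) (k : ℕ) {t : ℝ} (ht : 0 ≤ t) :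
    exp (-t * s) * term p b k t =
      b ^ k / Gamma (p * k + 1) * (t ^ (p * k + 1 - 1) * exp (-(s * t))) := by
  rw [term, add_sub_cancel_right, rpow_mul_natCast ht, mul_pow, mul_comm s t, neg_mul]
  ring

lemma integrableOn_exp_neg_mul_term (hp : 0 ≤ p) (hs : 0 < s) (b : ℝ) (k : ℕ) :
    IntegrableOn (fun t ↦ exp (-t * s) * term p b k t) (Ioi 0) := by
  have hGamma : IntegrableOn (fun t : ℝ ↦ t ^ (p * k) * exp (-s * t ^ (1 : ℝ))) (Ioi 0) :=
    integrableOn_rpow_mul_exp_neg_mul_rpow (by linarith [mul_nonneg hp k.cast_nonneg])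
      zero_lt_one hs
  refine IntegrableOn.congr_fun (hGamma.const_mul (b ^ k / Gamma (p * k + 1))) (fun t ht ↦ ?_)
    measurableSet_Ioi
  rw [exp_neg_mul_term_eq b k (le_of_lt ht), add_sub_cancel_right, rpow_one, neg_mul]

lemma integral_exp_neg_mul_term (hp : 0 ≤ p) (hs : 0 < s) (b : ℝ) (k : ℕ) :
    ∫ t in Ioi 0, exp (-t * s) * term p b k t = (b / s ^ p) ^ k / s := by
  have hpk : 0 < p * k + 1 := by positivity
  rw [setIntegral_congr_fun measurableSet_Ioi fun t ht ↦ exp_neg_mul_term_eq b k (le_of_lt ht),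
    integral_const_mul, integral_rpow_mul_exp_neg_mul_Ioi hpk hs, rpow_add_one (by positivity),
    rpow_mul_natCast (by positivity), one_div, inv_rpow hs.le]
  field_simp [(Gamma_pos_of_pos hpk).ne']
  rw [← mul_pow, mul_one_div]

lemma integral_norm_exp_neg_mul_term (hp : 0 ≤ p) (hs : 0 < s) (b : ℝ) (k : ℕ) :
    ∫ t in Ioi 0, ‖exp (-t * s) * term p b k t‖ = (|b| / s ^ p) ^ k / s := by
  have hΓ : 0 < Gamma (p * k + 1) := Gamma_pos_of_pos (by positivity)
  rw [← integral_exp_neg_mul_term hp hs]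
  refine setIntegral_congr_fun measurableSet_Ioi fun t ht ↦ ?_
  simp only [term, norm_mul, norm_div, norm_pow, norm_eq_abs, abs_of_pos (exp_pos _),
    abs_of_pos hΓ, abs_of_pos (rpow_pos_of_pos (mem_Ioi.mp ht) p)]

theorem integral_exp_neg_mul_tsum_term (hp : 0 ≤ p) (hs : 0 < s) {b : ℝ} (hb : |b| < s ^ p) :
    ∫ t in Ioi 0, exp (-t * s) * ∑' k, term p b k t = s ^ (p - 1) / (s ^ p - b) := by
  have hsp : 0 < s ^ p := rpow_pos_of_pos hs p
  have hratio : ∀ c : ℝ, |c| < s ^ p → ‖c / s ^ p‖ < 1 := fun c hc ↦ by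
    rwa [norm_div, norm_eq_abs, norm_eq_abs, abs_of_pos hsp, div_lt_one hsp]
  have hsummable : Summable fun k ↦ ∫ t in Ioi 0, ‖exp (-t * s) * term p b k t‖ := by
    simp_rw [integral_norm_exp_neg_mul_term hp hs]
    exact (summable_geometric_of_norm_lt_one (hratio |b| (by rwa [abs_abs]))).div_const s
  calc ∫ t in Ioi 0, exp (-t * s) * ∑' k, term p b k t
      = ∑' k, ∫ t in Ioi 0, exp (-t * s) * term p b k t := by
        simp_rw [← tsum_mul_left]
        exact (integral_tsum_of_summable_integral_norm
          (integrableOn_exp_neg_mul_term hp hs b) hsummable).symm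
    _ = (1 - b / s ^ p)⁻¹ / s := by
        simp_rw [integral_exp_neg_mul_term hp hs, tsum_div_const,
          tsum_geometric_of_norm_lt_one (hratio b hb)]
    _ = s ^ (p - 1) / (s ^ p - b) := by
        have hne : s ^ p - b ≠ 0 := by linarith [le_abs_self b]
        rw [rpow_sub_one hs.ne']
        field_simp

end MittagLeffler

open MittagLeffler in
theorem sadik_transform_mittagLeffler_one_general (p a α β v : ℝ)
    (hp : 0 < p) (hv : 0 < v)
    (hva : |a| < v ^ (α * p)) :
    v ^ (-β) * ∫ t in Set.Ioi (0:ℝ),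
        Real.exp (-t * v ^ α) *
          (∑' k : ℕ, (a * t ^ p) ^ k / Real.Gamma (p * k + 1)) =
      v ^ (α * (p - 1) - β) / (v ^ (α * p) - a) := by
  rw [rpow_mul hv.le] at hva ⊢
  have hlaplace := integral_exp_neg_mul_tsum_term hp.le (rpow_pos_of_pos hv α) hva
  simp only [term] at hlaplace
  rw [hlaplace, sub_eq_add_neg (α * (p - 1)), rpow_add hv, rpow_mul hv.le]
  ring

/-- Sadik transform of `E_{p,1}(a t^p)` equals `v^{α(p-1)-β} / (v^{αp} - a)`. -/
theorem sadik_transform_mittagLeffler_one (p a α β v : ℝ)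
    (hp : 0 < p) (hα : α ≠ 0) (hv : 0 < v)
    (hva : |a| < v ^ (α * p)) :
    v ^ (-β) * ∫ t in Set.Ioi (0:ℝ),
        Real.exp (-t * v ^ α) *
          (∑' k : ℕ, (a * t ^ p) ^ k / Real.Gamma (p * k + 1)) =
      v ^ (α * (p - 1) - β) / (v ^ (α * p) - a) :=
  sadik_transform_mittagLeffler_one_general p a α β v hp hv hva
end

section
/- Let 0 < γ < 1, let φ : [0,∞) → ℝ be continuous and exponentially bounded (|φ(t)| ≤ M e^{σt} for all t ≥ T, some M, σ > 0), and define u(t) = u₀ + (1/Γ(γ)) ∫₀^t (t−τ)^{γ−1} φ(τ) dτ. Then u is exponentially bounded: there exists A > 0 such that |u(t)| ≤ A e^{σt} for all t ≥ T. -/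
open Real MeasureTheory

/-! Continuity on `[0, T]` extends the exponential bound on `φ` to all of `[0, ∞)`.
After the substitution `s = t - τ`,
`∫₀ᵗ (t - τ)^(γ-1) e^(στ) dτ = e^(σt) ∫₀ᵗ s^(γ-1) e^(-σs) ds ≤ e^(σt) Γ(γ) / σ^γ`,
so the fractional integral of `φ` grows at most like `e^(σt)`, and the factor `1 / Γ(γ)`
cancels the Gamma function. -/

theorem exists_abs_le_mul_exp_of_continuousOn {φ : ℝ → ℝ} {a T M σ : ℝ}
    (hφ : ContinuousOn φ (Set.Icc a T)) (hbound : ∀ t ≥ T, |φ t| ≤ M * exp (σ * t)) :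
    ∃ C > 0, ∀ t ≥ a, |φ t| ≤ C * exp (σ * t) := by
  obtain ⟨K, hK⟩ := isCompact_Icc.exists_bound_of_continuousOn
    (hφ.mul (continuous_exp.comp (continuous_const.mul continuous_id).neg).continuousOn)
  refine ⟨max (max M K) 1, by positivity, fun t ht => ?_⟩
  rcases le_total t T with htT | htT
  · have hKt : |φ t| * exp (-(σ * t)) ≤ K := by
      simpa [abs_mul] using hK t ⟨ht, htT⟩
    calc |φ t| = |φ t| * exp (-(σ * t)) * exp (σ * t) := by
          rw [mul_assoc, ← exp_add, neg_add_cancel, exp_zero, mul_one]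
      _ ≤ max (max M K) 1 * exp (σ * t) := by gcongr; exact hKt.trans (by simp)
  · exact (hbound t htT).trans (by gcongr; simp)

theorem integral_rpow_mul_exp_neg_mul_le_Gamma {γ σ t : ℝ} (hγ : 0 < γ) (hσ : 0 < σ)
    (ht : 0 ≤ t) :
    ∫ s in (0 : ℝ)..t, s ^ (γ - 1) * exp (-(σ * s)) ≤ (1 / σ) ^ γ * Gamma γ := by
  have hint : IntegrableOn (fun s : ℝ => s ^ (γ - 1) * exp (-(σ * s))) (Set.Ioi 0) := by
    simpa [neg_mul] using integrableOn_rpow_mul_exp_neg_mul_rpow (p := 1) (by linarith)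
      zero_lt_one hσ
  rw [← integral_rpow_mul_exp_neg_mul_Ioi hγ hσ, intervalIntegral.integral_of_le ht]
  refine setIntegral_mono_set hint ?_ Set.Ioc_subset_Ioi_self.eventuallyLE
  filter_upwards [self_mem_ae_restrict measurableSet_Ioi] with s hs
  exact mul_nonneg (rpow_nonneg (le_of_lt hs) _) (exp_pos _).le

theorem intervalIntegrable_sub_rpow {γ t : ℝ} (hγ : 0 < γ) :
    IntervalIntegrable (fun τ => (t - τ) ^ (γ - 1)) volume 0 t := by
  simpa using ((intervalIntegral.intervalIntegrable_rpow' (a := 0) (b := t)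
    (r := γ - 1) (by linarith)).comp_sub_left t).symm

theorem integral_sub_rpow_mul_exp_le {γ σ t : ℝ} (hγ : 0 < γ) (hσ : 0 < σ) (ht : 0 ≤ t) :
    ∫ τ in (0 : ℝ)..t, (t - τ) ^ (γ - 1) * exp (σ * τ) ≤
      (1 / σ) ^ γ * Gamma γ * exp (σ * t) := by
  have hsubst : ∫ τ in (0 : ℝ)..t, (t - τ) ^ (γ - 1) * exp (σ * τ) =
      exp (σ * t) * ∫ s in (0 : ℝ)..t, s ^ (γ - 1) * exp (-(σ * s)) := by
    rw [← intervalIntegral.integral_const_mul]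
    simpa [mul_left_comm (exp (σ * t)), ← exp_add, mul_sub] using
      intervalIntegral.integral_comp_sub_left
        (fun s => exp (σ * t) * (s ^ (γ - 1) * exp (-(σ * s)))) t (a := 0) (b := t)
  rw [hsubst, mul_comm _ (exp (σ * t))]
  exact mul_le_mul_of_nonneg_left (integral_rpow_mul_exp_neg_mul_le_Gamma hγ hσ ht)
    (exp_pos _).le

theorem abs_integral_sub_rpow_mul_le {φ : ℝ → ℝ} {γ σ t C : ℝ} (hγ : 0 < γ) (hσ : 0 < σ)
    (ht : 0 ≤ t) (hC : 0 ≤ C) (hφ : ∀ τ ∈ Set.Ioc 0 t, |φ τ| ≤ C * exp (σ * τ)) :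
    |∫ τ in (0 : ℝ)..t, (t - τ) ^ (γ - 1) * φ τ| ≤
      C * ((1 / σ) ^ γ * Gamma γ) * exp (σ * t) := by
  have hdom : IntervalIntegrable (fun τ => (t - τ) ^ (γ - 1) * (C * exp (σ * τ))) volume 0 t :=
    (intervalIntegrable_sub_rpow hγ).mul_continuousOn (by fun_prop)
  calc |∫ τ in (0 : ℝ)..t, (t - τ) ^ (γ - 1) * φ τ|
      ≤ ∫ τ in (0 : ℝ)..t, (t - τ) ^ (γ - 1) * (C * exp (σ * τ)) := by
        rw [← Real.norm_eq_abs]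
        refine intervalIntegral.norm_integral_le_of_norm_le ht (ae_of_all _ fun τ hτ => ?_) hdom
        rw [Real.norm_eq_abs, abs_mul, abs_of_nonneg (rpow_nonneg (by linarith [hτ.2]) _)]
        exact mul_le_mul_of_nonneg_left (hφ τ hτ) (rpow_nonneg (by linarith [hτ.2]) _)
    _ = C * ∫ τ in (0 : ℝ)..t, (t - τ) ^ (γ - 1) * exp (σ * τ) := by
        rw [← intervalIntegral.integral_const_mul]; congr 1 with τ; ring
    _ ≤ C * ((1 / σ) ^ γ * Gamma γ * exp (σ * t)) :=
        mul_le_mul_of_nonneg_left (integral_sub_rpow_mul_exp_le hγ hσ ht) hC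
    _ = C * ((1 / σ) ^ γ * Gamma γ) * exp (σ * t) := by ring

theorem frac_solution_exponentially_bounded_general (γ : ℝ) (hγ₀ : 0 < γ)
    (φ : ℝ → ℝ) (u₀ M σ T : ℝ) (hφ : Continuous φ)
    (hσ : 0 < σ) (hT : 0 ≤ T)
    (hbound : ∀ t ≥ T, |φ t| ≤ M * Real.exp (σ * t)) :
    ∃ A > 0, ∀ t ≥ T,
      |u₀ + (1 / Real.Gamma γ) * ∫ τ in (0:ℝ)..t, (t - τ) ^ (γ - 1) * φ τ| ≤
        A * Real.exp (σ * t) := by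
  obtain ⟨C, hC, hφC⟩ := exists_abs_le_mul_exp_of_continuousOn (a := 0) hφ.continuousOn hbound
  have hΓ : 0 < Gamma γ := Gamma_pos_of_pos hγ₀
  refine ⟨|u₀| + C * (1 / σ) ^ γ, by positivity, fun t ht => ?_⟩
  have ht0 : 0 ≤ t := hT.trans ht
  have hI := abs_integral_sub_rpow_mul_le hγ₀ hσ ht0 hC.le fun τ hτ => hφC τ hτ.1.le
  have hexp : 1 ≤ exp (σ * t) := one_le_exp (by positivity)
  calc |u₀ + (1 / Gamma γ) * ∫ τ in (0:ℝ)..t, (t - τ) ^ (γ - 1) * φ τ|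
      ≤ |u₀| + |(1 / Gamma γ) * ∫ τ in (0:ℝ)..t, (t - τ) ^ (γ - 1) * φ τ| := abs_add_le _ _
    _ = |u₀| + (1 / Gamma γ) * |∫ τ in (0:ℝ)..t, (t - τ) ^ (γ - 1) * φ τ| := by
        rw [abs_mul, abs_of_pos (one_div_pos.mpr hΓ)]
    _ ≤ |u₀| + (1 / Gamma γ) * (C * ((1 / σ) ^ γ * Gamma γ) * exp (σ * t)) := by gcongr
    _ = |u₀| + C * (1 / σ) ^ γ * exp (σ * t) := by field_simp
    _ ≤ (|u₀| + C * (1 / σ) ^ γ) * exp (σ * t) := by nlinarith [abs_nonneg u₀]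

/-- The solution of a Caputo fractional IVP with exponentially bounded
right-hand side is itself exponentially bounded. -/
theorem frac_solution_exponentially_bounded (γ : ℝ) (hγ₀ : 0 < γ) (hγ₁ : γ < 1)
    (φ : ℝ → ℝ) (u₀ M σ T : ℝ) (hφ : Continuous φ)
    (hM : 0 < M) (hσ : 0 < σ) (hT : 0 ≤ T)
    (hbound : ∀ t ≥ T, |φ t| ≤ M * Real.exp (σ * t)) :
    ∃ A > 0, ∀ t ≥ T,
      |u₀ + (1 / Real.Gamma γ) * ∫ τ in (0:ℝ)..t, (t - τ) ^ (γ - 1) * φ τ| ≤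
        A * Real.exp (σ * t) :=
  frac_solution_exponentially_bounded_general γ hγ₀ φ u₀ M σ T hφ hσ hT hbound
end
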